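/- Let i, j, k, l be four pairwise distinct indices in {1, …, n}. Then the three elements (ij)(kl), (ik)(jl), and (il)(kj) of H_n pairwise commute. -/

import Mathlib

noncomputable section

/-- Generators of the algebra `H q n`: `x i` and `y i` for `i : Fin n`. -/
inductive Gen (n : ℕ) : Type
  | x : Fin n → Gen n
  | y : Fin n → Gen n

open FreeAlgebra in
/-- The defining relations of the braided algebra `H_n`:
`x_i y_i = q y_i x_i`, and for `i < j`:
`x_j x_i = q² x_i x_j`, `y_j y_i = q² y_i y_j`,
`x_j y_i = q y_i x_j + (q² − 1) x_i y_j`, `y_j x_i = q x_i y_j`. -/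
inductive HRel (q : ℂ) (n : ℕ) :
    FreeAlgebra ℂ (Gen n) → FreeAlgebra ℂ (Gen n) → Prop
  | diag (i : Fin n) :
      HRel q n (ι ℂ (Gen.x i) * ι ℂ (Gen.y i)) (q • (ι ℂ (Gen.y i) * ι ℂ (Gen.x i)))
  | xx {i j : Fin n} (h : i < j) :
      HRel q n (ι ℂ (Gen.x j) * ι ℂ (Gen.x i)) ((q ^ 2) • (ι ℂ (Gen.x i) * ι ℂ (Gen.x j)))
  | yy {i j : Fin n} (h : i < j) :
      HRel q n (ι ℂ (Gen.y j) * ι ℂ (Gen.y i)) ((q ^ 2) • (ι ℂ (Gen.y i) * ι ℂ (Gen.y j)))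
  | xy {i j : Fin n} (h : i < j) :
      HRel q n (ι ℂ (Gen.x j) * ι ℂ (Gen.y i))
        (q • (ι ℂ (Gen.y i) * ι ℂ (Gen.x j)) + (q ^ 2 - 1) • (ι ℂ (Gen.x i) * ι ℂ (Gen.y j)))
  | yx {i j : Fin n} (h : i < j) :
      HRel q n (ι ℂ (Gen.y j) * ι ℂ (Gen.x i)) (q • (ι ℂ (Gen.x i) * ι ℂ (Gen.y j)))

/-- The braided module algebra `H_n`. -/
abbrev H (q : ℂ) (n : ℕ) : Type := RingQuot (HRel q n)

/-- The generator `x i` of `H_n`. -/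
def X (q : ℂ) {n : ℕ} (i : Fin n) : H q n :=
  RingQuot.mkAlgHom ℂ (HRel q n) (FreeAlgebra.ι ℂ (Gen.x i))

/-- The generator `y i` of `H_n`. -/
def Y (q : ℂ) {n : ℕ} (i : Fin n) : H q n :=
  RingQuot.mkAlgHom ℂ (HRel q n) (FreeAlgebra.ι ℂ (Gen.y i))

/-- The bracket symbol `(ij) = q^{-1/2} x_i y_j - q^{1/2} y_i x_j`, where `s = q^{1/2}`. -/
def br (q s : ℂ) {n : ℕ} (i j : Fin n) : H q n :=
  s⁻¹ • (X q i * Y q j) - s • (Y q i * X q j)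


namespace Stmt5Proof

/-- Rescaled bracket `s * (ij) = x_i y_j - q y_i x_j`. -/
def brs (q : ℂ) {n : ℕ} (i j : Fin n) : H q n :=
  X q i * Y q j - q • (Y q i * X q j)

variable {q : ℂ} {n : ℕ}

lemma rel_diag (i : Fin n) : X q i * Y q i = q • (Y q i * X q i) := by
  have h := RingQuot.mkAlgHom_rel ℂ (HRel.diag (q := q) (n := n) i)
  rw [map_mul, map_smul, map_mul] at h
  exact h

lemma rel_xx {i j : Fin n} (h : i < j) : X q j * X q i = (q ^ 2) • (X q i * X q j) := by
  have h2 := RingQuot.mkAlgHom_rel ℂ (HRel.xx (q := q) (n := n) h)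
  rw [map_mul, map_smul, map_mul] at h2
  exact h2

lemma rel_yy {i j : Fin n} (h : i < j) : Y q j * Y q i = (q ^ 2) • (Y q i * Y q j) := by
  have h2 := RingQuot.mkAlgHom_rel ℂ (HRel.yy (q := q) (n := n) h)
  rw [map_mul, map_smul, map_mul] at h2
  exact h2

lemma rel_xy {i j : Fin n} (h : i < j) :
    X q j * Y q i = q • (Y q i * X q j) + (q ^ 2 - 1) • (X q i * Y q j) := by
  have h2 := RingQuot.mkAlgHom_rel ℂ (HRel.xy (q := q) (n := n) h)
  rw [map_mul, map_add, map_smul, map_smul, map_mul, map_mul] at h2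
  exact h2

lemma rel_yx {i j : Fin n} (h : i < j) : Y q j * X q i = q • (X q i * Y q j) := by
  have h2 := RingQuot.mkAlgHom_rel ℂ (HRel.yx (q := q) (n := n) h)
  rw [map_mul, map_smul, map_mul] at h2
  exact h2

lemma rel_diag' (i : Fin n) (t : H q n) :
    X q i * (Y q i * t) = q • (Y q i * (X q i * t)) := by
  rw [← mul_assoc, rel_diag, smul_mul_assoc, mul_assoc]

lemma rel_xx' {i j : Fin n} (h : i < j) (t : H q n) :
    X q j * (X q i * t) = (q ^ 2) • (X q i * (X q j * t)) := by
  rw [← mul_assoc, rel_xx h, smul_mul_assoc, mul_assoc]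

lemma rel_yy' {i j : Fin n} (h : i < j) (t : H q n) :
    Y q j * (Y q i * t) = (q ^ 2) • (Y q i * (Y q j * t)) := by
  rw [← mul_assoc, rel_yy h, smul_mul_assoc, mul_assoc]

lemma rel_xy' {i j : Fin n} (h : i < j) (t : H q n) :
    X q j * (Y q i * t) = q • (Y q i * (X q j * t)) + (q ^ 2 - 1) • (X q i * (Y q j * t)) := by
  rw [← mul_assoc, rel_xy h, add_mul, smul_mul_assoc, smul_mul_assoc, mul_assoc, mul_assoc]

lemma rel_yx' {i j : Fin n} (h : i < j) (t : H q n) :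
    Y q j * (X q i * t) = q • (X q i * (Y q j * t)) := by
  rw [← mul_assoc, rel_yx h, smul_mul_assoc, mul_assoc]


lemma hng (u v : H q n) : -u * v = -(u * v) := neg_mul u v

lemma hgn (u v : H q n) : u * -v = -(u * v) := mul_neg u v

lemma hnn (u : H q n) : - -u = u := neg_neg u

lemma hCnl {u v : H q n} : Commute (-u) v ↔ Commute u v := by
  constructor
  · intro h
    have h2 : -(u * v) = -(v * u) := by rw [← hng, ← hgn]; exact h
    exact neg_inj.mp h2
  · intro h
    show -u * v = v * -u
    rw [hng, hgn, h]

lemma hCnr {u v : H q n} : Commute u (-v) ↔ Commute u v := by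
  constructor
  · intro h
    have h2 : -(u * v) = -(v * u) := by rw [← hgn, ← hng]; exact h
    exact neg_inj.mp h2
  · intro h
    show u * -v = -v * u
    rw [hgn, hng, h]

lemma brs_swap {i j : Fin n} (h : i < j) : brs q j i = - brs q i j := by
  unfold brs
  rw [rel_xy h, rel_yx h]
  module

lemma brs_swap' {i j : Fin n} (h : i ≠ j) : brs q j i = - brs q i j := by
  rcases h.lt_or_gt with h' | h'
  · exact brs_swap h'
  · rw [brs_swap h', neg_neg]

set_option maxHeartbeats 4000000 in
lemma master_sorted (q : ℂ) {n : ℕ} {a b c d : Fin n} (hab : a < b) (hbc : b < c)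
    (hcd : c < d) (u v : H q n)
    (hu : u = brs q a b * brs q c d ∨ u = brs q c d * brs q a b ∨
      u = brs q a c * brs q b d ∨ u = brs q b d * brs q a c ∨
      u = brs q a d * brs q b c ∨ u = brs q b c * brs q a d)
    (hv : v = brs q a b * brs q c d ∨ v = brs q c d * brs q a b ∨
      v = brs q a c * brs q b d ∨ v = brs q b d * brs q a c ∨
      v = brs q a d * brs q b c ∨ v = brs q b c * brs q a d) :
    Commute u v := by
  have hac := hab.trans hbc
  have hbd := hbc.trans hcd
  have had := hab.trans hbd
  have hA' : brs q c d * brs q a b = (q ^ 6) • (brs q a b * brs q c d) := by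
    unfold brs
    simp only [sub_mul, mul_sub, smul_mul_assoc, mul_smul_comm, smul_smul, mul_assoc, smul_sub,
    smul_add, mul_add, add_mul, sub_mul,
    rel_diag, rel_diag', rel_xx hab, rel_xx' hab, rel_yy hab, rel_yy' hab, rel_xy hab,
    rel_xy' hab, rel_yx hab, rel_yx' hab,
    rel_xx hac, rel_xx' hac, rel_yy hac, rel_yy' hac, rel_xy hac, rel_xy' hac, rel_yx hac,
    rel_yx' hac,
    rel_xx had, rel_xx' had, rel_yy had, rel_yy' had, rel_xy had, rel_xy' had, rel_yx had,
    rel_yx' had,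
    rel_xx hbc, rel_xx' hbc, rel_yy hbc, rel_yy' hbc, rel_xy hbc, rel_xy' hbc, rel_yx hbc,
    rel_yx' hbc,
    rel_xx hbd, rel_xx' hbd, rel_yy hbd, rel_yy' hbd, rel_xy hbd, rel_xy' hbd, rel_yx hbd,
    rel_yx' hbd,
    rel_xx hcd, rel_xx' hcd, rel_yy hcd, rel_yy' hcd, rel_xy hcd, rel_xy' hcd, rel_yx hcd,
    rel_yx' hcd]
    module
  have hB' : brs q b d * brs q a c
      = (q ^ 4 - q ^ 6) • (brs q a b * brs q c d) + (q ^ 4) • (brs q a c * brs q b d) := by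
    unfold brs
    simp only [sub_mul, mul_sub, smul_mul_assoc, mul_smul_comm, smul_smul, mul_assoc, smul_sub,
    smul_add, mul_add, add_mul, sub_mul,
    rel_diag, rel_diag', rel_xx hab, rel_xx' hab, rel_yy hab, rel_yy' hab, rel_xy hab,
    rel_xy' hab, rel_yx hab, rel_yx' hab,
    rel_xx hac, rel_xx' hac, rel_yy hac, rel_yy' hac, rel_xy hac, rel_xy' hac, rel_yx hac,
    rel_yx' hac,
    rel_xx had, rel_xx' had, rel_yy had, rel_yy' had, rel_xy had, rel_xy' had, rel_yx had,
    rel_yx' had,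
    rel_xx hbc, rel_xx' hbc, rel_yy hbc, rel_yy' hbc, rel_xy hbc, rel_xy' hbc, rel_yx hbc,
    rel_yx' hbc,
    rel_xx hbd, rel_xx' hbd, rel_yy hbd, rel_yy' hbd, rel_xy hbd, rel_xy' hbd, rel_yx hbd,
    rel_yx' hbd,
    rel_xx hcd, rel_xx' hcd, rel_yy hcd, rel_yy' hcd, rel_xy hcd, rel_xy' hcd, rel_yx hcd,
    rel_yx' hcd]
    module
  have hC : brs q a d * brs q b c
      = (q ^ 2) • (brs q a c * brs q b d) - (q ^ 4) • (brs q a b * brs q c d) := by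
    unfold brs
    simp only [sub_mul, mul_sub, smul_mul_assoc, mul_smul_comm, smul_smul, mul_assoc, smul_sub,
    smul_add, mul_add, add_mul, sub_mul,
    rel_diag, rel_diag', rel_xx hab, rel_xx' hab, rel_yy hab, rel_yy' hab, rel_xy hab,
    rel_xy' hab, rel_yx hab, rel_yx' hab,
    rel_xx hac, rel_xx' hac, rel_yy hac, rel_yy' hac, rel_xy hac, rel_xy' hac, rel_yx hac,
    rel_yx' hac,
    rel_xx had, rel_xx' had, rel_yy had, rel_yy' had, rel_xy had, rel_xy' had, rel_yx had,
    rel_yx' had,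
    rel_xx hbc, rel_xx' hbc, rel_yy hbc, rel_yy' hbc, rel_xy hbc, rel_xy' hbc, rel_yx hbc,
    rel_yx' hbc,
    rel_xx hbd, rel_xx' hbd, rel_yy hbd, rel_yy' hbd, rel_xy hbd, rel_xy' hbd, rel_yx hbd,
    rel_yx' hbd,
    rel_xx hcd, rel_xx' hcd, rel_yy hcd, rel_yy' hcd, rel_xy hcd, rel_xy' hcd, rel_yx hcd,
    rel_yx' hcd]
    module
  have hC' : brs q b c * brs q a d
      = (q ^ 2) • (brs q a c * brs q b d) - (q ^ 4) • (brs q a b * brs q c d) := by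
    unfold brs
    simp only [sub_mul, mul_sub, smul_mul_assoc, mul_smul_comm, smul_smul, mul_assoc, smul_sub,
    smul_add, mul_add, add_mul, sub_mul,
    rel_diag, rel_diag', rel_xx hab, rel_xx' hab, rel_yy hab, rel_yy' hab, rel_xy hab,
    rel_xy' hab, rel_yx hab, rel_yx' hab,
    rel_xx hac, rel_xx' hac, rel_yy hac, rel_yy' hac, rel_xy hac, rel_xy' hac, rel_yx hac,
    rel_yx' hac,
    rel_xx had, rel_xx' had, rel_yy had, rel_yy' had, rel_xy had, rel_xy' had, rel_yx had,
    rel_yx' had,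
    rel_xx hbc, rel_xx' hbc, rel_yy hbc, rel_yy' hbc, rel_xy hbc, rel_xy' hbc, rel_yx hbc,
    rel_yx' hbc,
    rel_xx hbd, rel_xx' hbd, rel_yy hbd, rel_yy' hbd, rel_xy hbd, rel_xy' hbd, rel_yx hbd,
    rel_yx' hbd,
    rel_xx hcd, rel_xx' hcd, rel_yy hcd, rel_yy' hcd, rel_xy hcd, rel_xy' hcd, rel_yx hcd,
    rel_yx' hcd]
    module
  have hAB : (brs q a b * brs q c d) * (brs q a c * brs q b d)
      = (brs q a c * brs q b d) * (brs q a b * brs q c d) := by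
    unfold brs
    simp only [sub_mul, mul_sub, smul_mul_assoc, mul_smul_comm, smul_smul, mul_assoc, smul_sub,
    smul_add, mul_add, add_mul, sub_mul,
    rel_diag, rel_diag', rel_xx hab, rel_xx' hab, rel_yy hab, rel_yy' hab, rel_xy hab,
    rel_xy' hab, rel_yx hab, rel_yx' hab,
    rel_xx hac, rel_xx' hac, rel_yy hac, rel_yy' hac, rel_xy hac, rel_xy' hac, rel_yx hac,
    rel_yx' hac,
    rel_xx had, rel_xx' had, rel_yy had, rel_yy' had, rel_xy had, rel_xy' had, rel_yx had,
    rel_yx' had,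
    rel_xx hbc, rel_xx' hbc, rel_yy hbc, rel_yy' hbc, rel_xy hbc, rel_xy' hbc, rel_yx hbc,
    rel_yx' hbc,
    rel_xx hbd, rel_xx' hbd, rel_yy hbd, rel_yy' hbd, rel_xy hbd, rel_xy' hbd, rel_yx hbd,
    rel_yx' hbd,
    rel_xx hcd, rel_xx' hcd, rel_yy hcd, rel_yy' hcd, rel_xy hcd, rel_xy' hcd, rel_yx hcd,
    rel_yx' hcd]
    module
  have key : ∀ w : H q n, (w = brs q a b * brs q c d ∨ w = brs q c d * brs q a b ∨
      w = brs q a c * brs q b d ∨ w = brs q b d * brs q a c ∨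
      w = brs q a d * brs q b c ∨ w = brs q b c * brs q a d) →
      ∃ α β : ℂ, w = α • (brs q a b * brs q c d) + β • (brs q a c * brs q b d) := by
    rintro w (rfl | rfl | rfl | rfl | rfl | rfl)
    · exact ⟨1, 0, by module⟩
    · exact ⟨q ^ 6, 0, by rw [hA']; module⟩
    · exact ⟨0, 1, by module⟩
    · exact ⟨q ^ 4 - q ^ 6, q ^ 4, by rw [hB']⟩
    · exact ⟨-(q ^ 4), q ^ 2, by rw [hC]; module⟩
    · exact ⟨-(q ^ 4), q ^ 2, by rw [hC']; module⟩
  obtain ⟨α, β, rfl⟩ := key u hu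
  obtain ⟨γ, δ, rfl⟩ := key v hv
  show _ = _
  simp only [add_mul, mul_add, smul_mul_assoc, mul_smul_comm, smul_smul]
  rw [hAB]
  module

lemma L (q : ℂ) {n : ℕ} {w x y z : Fin n} (hwx : w ≠ x) (hwy : w ≠ y) (hwz : w ≠ z)
    (hxy : x ≠ y) (hxz : x ≠ z) (hyz : y ≠ z) :
    Commute (brs q w x * brs q y z) (brs q w y * brs q x z) := by
  rcases (hwx.symm).lt_or_gt with ho1 | ho1
  ·
    rcases (hxy.symm).lt_or_gt with ho2 | ho2
    ·
      rcases (hyz.symm).lt_or_gt with ho3 | ho3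
      ·
        simp only [brs_swap ho1, brs_swap ho3, brs_swap (ho2.trans ho1), brs_swap (ho3.trans ho2), hng, hgn, hnn, hCnl, hCnr]
        exact master_sorted q ho3 ho2 ho1 _ _ (Or.inr (Or.inl rfl))
          (Or.inr (Or.inr (Or.inr (Or.inl rfl))))
      ·
        rcases (hxz.symm).lt_or_gt with ho4 | ho4
        ·
          simp only [brs_swap ho1, brs_swap ((ho3.trans ho4).trans ho1), brs_swap ho4, hng, hgn, hnn, hCnl, hCnr]
          exact master_sorted q ho3 ho4 ho1 _ _ (Or.inr (Or.inl rfl))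
            (Or.inr (Or.inr (Or.inr (Or.inr (Or.inl rfl)))))
        ·
          rcases (hwz.symm).lt_or_gt with ho5 | ho5
          ·
            simp only [brs_swap (ho4.trans ho5), brs_swap ((ho2.trans ho4).trans ho5), hng, hgn, hnn, hCnl, hCnr]
            exact master_sorted q ho2 ho4 ho5 _ _ (Or.inr (Or.inr (Or.inr (Or.inl rfl))))
              (Or.inr (Or.inr (Or.inr (Or.inr (Or.inl rfl)))))
          ·
            simp only [brs_swap ho1, brs_swap (ho2.trans ho1), hng, hgn, hnn, hCnl, hCnr]
            exact master_sorted q ho2 ho1 ho5 _ _ (Or.inr (Or.inr (Or.inr (Or.inr (Or.inr rfl)))))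
              (Or.inr (Or.inr (Or.inl rfl)))
    ·
      rcases (hwy.symm).lt_or_gt with ho3 | ho3
      ·
        rcases (hxz.symm).lt_or_gt with ho4 | ho4
        ·
          simp only [brs_swap (ho2.trans ho3), brs_swap (ho4.trans ho2), brs_swap ho3, brs_swap ho4, hng, hgn, hnn, hCnl, hCnr]
          exact master_sorted q ho4 ho2 ho3 _ _ (Or.inr (Or.inr (Or.inr (Or.inl rfl))))
            (Or.inr (Or.inl rfl))
        ·
          rcases (hyz.symm).lt_or_gt with ho5 | ho5
          ·
            simp only [brs_swap ((ho4.trans ho5).trans ho3), brs_swap ho5, brs_swap ho3, hng, hgn, hnn, hCnl, hCnr]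
            exact master_sorted q ho4 ho5 ho3 _ _ (Or.inr (Or.inr (Or.inr (Or.inr (Or.inl rfl)))))
              (Or.inr (Or.inl rfl))
          ·
            rcases (hwz.symm).lt_or_gt with ho6 | ho6
            ·
              simp only [brs_swap ((ho2.trans ho5).trans ho6), brs_swap (ho5.trans ho6), hng, hgn, hnn, hCnl, hCnr]
              exact master_sorted q ho2 ho5 ho6 _ _ (Or.inr (Or.inr (Or.inr (Or.inr (Or.inl rfl)))))
                (Or.inr (Or.inr (Or.inr (Or.inl rfl))))
            ·
              simp only [brs_swap (ho2.trans ho3), brs_swap ho3, hng, hgn, hnn, hCnl, hCnr]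
              exact master_sorted q ho2 ho3 ho6 _ _ (Or.inr (Or.inr (Or.inl rfl)))
                (Or.inr (Or.inr (Or.inr (Or.inr (Or.inr rfl)))))
      ·
        rcases (hxz.symm).lt_or_gt with ho4 | ho4
        ·
          simp only [brs_swap ho1, brs_swap ((ho4.trans ho1).trans ho3), brs_swap ho4, hng, hgn, hnn, hCnl, hCnr]
          exact master_sorted q ho4 ho1 ho3 _ _ (Or.inr (Or.inr (Or.inr (Or.inr (Or.inr rfl)))))
            (Or.inr (Or.inl rfl))
        ·
          rcases (hwz.symm).lt_or_gt with ho5 | ho5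
          ·
            simp only [brs_swap (ho4.trans ho5), brs_swap (ho5.trans ho3), hng, hgn, hnn, hCnl, hCnr]
            exact master_sorted q ho4 ho5 ho3 _ _ (Or.inr (Or.inr (Or.inl rfl)))
              (Or.inr (Or.inl rfl))
          ·
            rcases (hyz.symm).lt_or_gt with ho6 | ho6
            ·
              simp only [brs_swap ho1, brs_swap ho6, hng, hgn, hnn, hCnl, hCnr]
              exact master_sorted q ho1 ho5 ho6 _ _ (Or.inl rfl)
                (Or.inr (Or.inr (Or.inr (Or.inl rfl))))
            ·
              simp only [brs_swap ho1, hng, hgn, hnn, hCnl, hCnr]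
              exact master_sorted q ho1 ho3 ho6 _ _ (Or.inl rfl)
                (Or.inr (Or.inr (Or.inr (Or.inr (Or.inr rfl)))))
  ·
    rcases (hwy.symm).lt_or_gt with ho2 | ho2
    ·
      rcases (hyz.symm).lt_or_gt with ho3 | ho3
      ·
        simp only [brs_swap ho3, brs_swap ho2, brs_swap ((ho3.trans ho2).trans ho1), hng, hgn, hnn, hCnl, hCnr]
        exact master_sorted q ho3 ho2 ho1 _ _ (Or.inr (Or.inl rfl))
          (Or.inr (Or.inr (Or.inr (Or.inr (Or.inr rfl)))))
      ·
        rcases (hwz.symm).lt_or_gt with ho4 | ho4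
        ·
          simp only [brs_swap (ho3.trans ho4), brs_swap (ho4.trans ho1), hng, hgn, hnn, hCnl, hCnr]
          exact master_sorted q ho3 ho4 ho1 _ _ (Or.inr (Or.inl rfl))
            (Or.inr (Or.inr (Or.inl rfl)))
        ·
          rcases (hxz.symm).lt_or_gt with ho5 | ho5
          ·
            simp only [brs_swap ho2, brs_swap ho5, hng, hgn, hnn, hCnl, hCnr]
            exact master_sorted q ho2 ho4 ho5 _ _ (Or.inr (Or.inr (Or.inr (Or.inl rfl))))
              (Or.inl rfl)
          ·
            simp only [brs_swap ho2, hng, hgn, hnn, hCnl, hCnr]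
            exact master_sorted q ho2 ho1 ho5 _ _ (Or.inr (Or.inr (Or.inr (Or.inr (Or.inr rfl)))))
              (Or.inl rfl)
    ·
      rcases (hxy.symm).lt_or_gt with ho3 | ho3
      ·
        rcases (hwz.symm).lt_or_gt with ho4 | ho4
        ·
          simp only [brs_swap (ho4.trans ho2), brs_swap ((ho4.trans ho2).trans ho3), hng, hgn, hnn, hCnl, hCnr]
          exact master_sorted q ho4 ho2 ho3 _ _ (Or.inr (Or.inr (Or.inr (Or.inl rfl))))
            (Or.inr (Or.inr (Or.inr (Or.inr (Or.inr rfl)))))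
        ·
          rcases (hyz.symm).lt_or_gt with ho5 | ho5
          ·
            simp only [brs_swap ho5, brs_swap (ho5.trans ho3), hng, hgn, hnn, hCnl, hCnr]
            exact master_sorted q ho4 ho5 ho3 _ _ (Or.inr (Or.inr (Or.inr (Or.inr (Or.inl rfl)))))
              (Or.inr (Or.inr (Or.inl rfl)))
          ·
            rcases (hxz.symm).lt_or_gt with ho6 | ho6
            ·
              simp only [brs_swap ho6, hng, hgn, hnn, hCnl, hCnr]
              exact master_sorted q ho2 ho5 ho6 _ _ (Or.inr (Or.inr (Or.inr (Or.inr (Or.inl rfl)))))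
                (Or.inl rfl)
            ·
              exact master_sorted q ho2 ho3 ho6 _ _ (Or.inr (Or.inr (Or.inl rfl)))
                (Or.inl rfl)
      ·
        rcases (hwz.symm).lt_or_gt with ho4 | ho4
        ·
          simp only [brs_swap ((ho4.trans ho1).trans ho3), brs_swap (ho4.trans ho1), hng, hgn, hnn, hCnl, hCnr]
          exact master_sorted q ho4 ho1 ho3 _ _ (Or.inr (Or.inr (Or.inr (Or.inr (Or.inr rfl)))))
            (Or.inr (Or.inr (Or.inr (Or.inl rfl))))
        ·
          rcases (hxz.symm).lt_or_gt with ho5 | ho5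
          ·
            simp only [brs_swap (ho5.trans ho3), brs_swap ho5, hng, hgn, hnn, hCnl, hCnr]
            exact master_sorted q ho4 ho5 ho3 _ _ (Or.inr (Or.inr (Or.inl rfl)))
              (Or.inr (Or.inr (Or.inr (Or.inr (Or.inl rfl)))))
          ·
            rcases (hyz.symm).lt_or_gt with ho6 | ho6
            ·
              simp only [brs_swap ho6, hng, hgn, hnn, hCnl, hCnr]
              exact master_sorted q ho1 ho5 ho6 _ _ (Or.inl rfl)
                (Or.inr (Or.inr (Or.inr (Or.inr (Or.inl rfl)))))
            ·
              exact master_sorted q ho1 ho3 ho6 _ _ (Or.inl rfl)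
                (Or.inr (Or.inr (Or.inl rfl)))

lemma commute_cancel {q : ℂ} {n : ℕ} {c : ℂ} (hc : c ≠ 0) {u v : H q n}
    (h : Commute (c • u) (c • v)) : Commute u v := by
  have h2 : (c * c) • (u * v) = (c * c) • (v * u) := by
    have h3 := h.eq
    rwa [smul_mul_assoc, mul_smul_comm, smul_smul, smul_mul_assoc, mul_smul_comm,
      smul_smul] at h3
  have h5 : u * v = v * u := by
    have h4 := congrArg (fun t : H q n => ((c * c)⁻¹ : ℂ) • t) h2
    simpa only [smul_smul, inv_mul_cancel₀ (mul_ne_zero hc hc), one_smul] using h4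
  exact h5

end Stmt5Proof

/-- **Proposition 3.2 (ii).** For pairwise distinct indices `i, j, k, l`
the three elements `(ij)(kl)`, `(ik)(jl)`, `(il)(kj)` pairwise commute. -/
theorem stmt5 (q s : ℂ) (hq : ‖q‖ = 1) (hq1 : q ≠ 1) (hq2 : q ≠ -1)
    (hq3 : q ≠ Complex.I) (hq4 : q ≠ -Complex.I) (hs : s ^ 2 = q)
    (n : ℕ) (hn : 1 ≤ n) (i j k l : Fin n)
    (hij : i ≠ j) (hik : i ≠ k) (hil : i ≠ l) (hjk : j ≠ k) (hjl : j ≠ l) (hkl : k ≠ l) :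
    Commute (br q s i j * br q s k l) (br q s i k * br q s j l) ∧
    Commute (br q s i j * br q s k l) (br q s i l * br q s k j) ∧
    Commute (br q s i k * br q s j l) (br q s i l * br q s k j) := by
  classical
  have hq0 : q ≠ 0 := by
    intro h
    rw [h] at hq
    simp at hq
  have hs0 : s ≠ 0 := by
    intro h
    rw [h] at hs
    simp only [ne_eq] at hq0
    exact hq0 (by simpa using hs.symm)
  have hssq : s * s = q := by rw [← hs]; ring
  have hone : ∀ (u v : Fin n), s • br q s u v = Stmt5Proof.brs q u v := by
    intro u v
    unfold br Stmt5Proof.brs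
    rw [smul_sub, smul_smul, smul_smul, mul_inv_cancel₀ hs0, one_smul, hssq]
  have hscale : ∀ (i' j' k' l' : Fin n),
      (s * s) • (br q s i' j' * br q s k' l') = Stmt5Proof.brs q i' j' * Stmt5Proof.brs q k' l' := by
    intro i' j' k' l'
    rw [← hone, ← hone, smul_mul_assoc, mul_smul_comm, smul_smul]
  have hss0 : s * s ≠ 0 := mul_ne_zero hs0 hs0
  refine ⟨?_, ?_, ?_⟩
  · refine Stmt5Proof.commute_cancel hss0 ?_
    rw [hscale, hscale]
    exact Stmt5Proof.L q hij hik hil hjk hjl hkl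
  · refine Stmt5Proof.commute_cancel hss0 ?_
    rw [hscale, hscale]
    have k2 := Stmt5Proof.L q hij hil hik hjl hjk hkl.symm
    simpa only [Stmt5Proof.brs_swap' hkl, Stmt5Proof.brs_swap' hjk.symm, Stmt5Proof.hng, Stmt5Proof.hgn,
      Stmt5Proof.hnn, Stmt5Proof.hCnl, Stmt5Proof.hCnr] using k2
  · refine Stmt5Proof.commute_cancel hss0 ?_
    rw [hscale, hscale]
    have k3 := Stmt5Proof.L q hik hil hij hkl hjk.symm hjl.symm
    simpa only [Stmt5Proof.brs_swap' hjl, Stmt5Proof.hng, Stmt5Proof.hgn,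
      Stmt5Proof.hnn, Stmt5Proof.hCnl, Stmt5Proof.hCnr] using k3
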